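/- Assume n ≥ 2, u* ∈ bd K_{n+1}, H ∩ int K_{n+1} = ∅, and H ∩ bd K_{n+1} = {u*}. Then for every u ∈ H with u ≠ u*, the unique nearest point of K_{n+1} to u (i.e., the unique v ∈ K_{n+1} with ‖u − v‖ ≤ ‖u − w‖ for all w ∈ K_{n+1}) is not equal to u*. -/

import Mathlib

/-- Euclidean norm of the tail `x₁` of `x = (x₀; x₁) ∈ ℝ × ℝⁿ`. -/
noncomputable def tailNorm {n : ℕ} (x : EuclideanSpace ℝ (Fin (n + 1))) : ℝ :=
  Real.sqrt (∑ i : Fin n, x i.succ ^ 2)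

/-- The second-order cone `K_{n+1} = {(x₀; x₁) : ‖x₁‖ ≤ x₀}`. -/
def soc (n : ℕ) : Set (EuclideanSpace ℝ (Fin (n + 1))) :=
  {x | tailNorm x ≤ x 0}

/-- The boundary of the second-order cone: `{(x₀; x₁) : ‖x₁‖ = x₀}`. -/
def socBd (n : ℕ) : Set (EuclideanSpace ℝ (Fin (n + 1))) :=
  {x | tailNorm x = x 0}

/-- The interior of the second-order cone: `{(x₀; x₁) : ‖x₁‖ < x₀}`. -/
def socInt (n : ℕ) : Set (EuclideanSpace ℝ (Fin (n + 1))) :=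
  {x | tailNorm x < x 0}

/-- `x̂ = (x₀; −x₁)` for `x = (x₀; x₁)`. -/
def socHat {n : ℕ} (x : EuclideanSpace ℝ (Fin (n + 1))) : EuclideanSpace ℝ (Fin (n + 1)) :=
  WithLp.toLp 2 (fun i => if i = 0 then x 0 else -(x i))

/-- `B t` viewed as an element of Euclidean space. -/
def mvE {m p : ℕ} (B : Matrix (Fin m) (Fin p) ℝ) (t : Fin p → ℝ) : EuclideanSpace ℝ (Fin m) :=
  WithLp.toLp 2 (fun i => B.mulVec t i)

/-- A Euclidean vector viewed as a plain function. -/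
def toFun {m : ℕ} (x : EuclideanSpace ℝ (Fin m)) : Fin m → ℝ := x

/-!
If `u* = P_K(u)`, then `d = u - u*` lies in the normal cone of `K` at `u*`, so `⟪d, k⟫ ≤ 0` for
every `k ∈ K` (test with `u* + k ∈ K`). Self-duality of the second-order cone gives `-d ∈ K`,
hence `u* - d ∈ K`. But `u* - d` is the reflection of `u` through `u*`, so it lies in `H`, and the
only point of `H ∩ K` is `u*`; thus `d = 0`, i.e. `u = u*`.
-/

open scoped InnerProductSpace

theorem real_inner_sub_le_zero_of_forall_norm_sub_le {F : Type*} [NormedAddCommGroup F]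
    [InnerProductSpace ℝ F] {K : Set F} (hK : Convex ℝ K) {u v : F} (hv : v ∈ K)
    (hmin : ∀ w ∈ K, ‖u - v‖ ≤ ‖u - w‖) : ∀ w ∈ K, ⟪u - v, w - v⟫_ℝ ≤ 0 := by
  refine (norm_eq_iInf_iff_real_inner_le_zero hK hv).mp (le_antisymm ?_ ?_)
  · have : Nonempty K := ⟨⟨v, hv⟩⟩
    exact le_ciInf fun w => hmin w w.2
  · exact ciInf_le ⟨0, by rintro _ ⟨w, rfl⟩; exact norm_nonneg _⟩ (⟨v, hv⟩ : K)

section SecondOrderCone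

variable {n : ℕ}

def socTail (x : EuclideanSpace ℝ (Fin (n + 1))) : EuclideanSpace ℝ (Fin n) :=
  WithLp.toLp 2 fun i => x i.succ

def socMk (a : ℝ) (y : EuclideanSpace ℝ (Fin n)) : EuclideanSpace ℝ (Fin (n + 1)) :=
  WithLp.toLp 2 (Fin.cons a y.ofLp)

@[simp] lemma socMk_zero (a : ℝ) (y : EuclideanSpace ℝ (Fin n)) : socMk a y 0 = a := rfl

@[simp] lemma socTail_socMk (a : ℝ) (y : EuclideanSpace ℝ (Fin n)) : socTail (socMk a y) = y :=
  rfl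

@[simp] lemma socTail_add (x y : EuclideanSpace ℝ (Fin (n + 1))) :
    socTail (x + y) = socTail x + socTail y := rfl

@[simp] lemma socTail_neg (x : EuclideanSpace ℝ (Fin (n + 1))) : socTail (-x) = -socTail x := rfl

@[simp] lemma socTail_smul (c : ℝ) (x : EuclideanSpace ℝ (Fin (n + 1))) :
    socTail (c • x) = c • socTail x := rfl

lemma tailNorm_eq_norm_socTail (x : EuclideanSpace ℝ (Fin (n + 1))) :
    tailNorm x = ‖socTail x‖ := by
  simp [tailNorm, EuclideanSpace.norm_eq, socTail, sq_abs]

lemma mem_soc_iff {x : EuclideanSpace ℝ (Fin (n + 1))} : x ∈ soc n ↔ ‖socTail x‖ ≤ x 0 := by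
  rw [← tailNorm_eq_norm_socTail]; rfl

lemma real_inner_eq_mul_add_inner_socTail (x y : EuclideanSpace ℝ (Fin (n + 1))) :
    ⟪x, y⟫_ℝ = x 0 * y 0 + ⟪socTail x, socTail y⟫_ℝ := by
  simp [PiLp.inner_apply, RCLike.inner_apply, socTail, Fin.sum_univ_succ, mul_comm]

lemma add_mem_soc {x y : EuclideanSpace ℝ (Fin (n + 1))} (hx : x ∈ soc n) (hy : y ∈ soc n) :
    x + y ∈ soc n := by
  rw [mem_soc_iff] at *
  calc ‖socTail (x + y)‖ ≤ ‖socTail x‖ + ‖socTail y‖ := by rw [socTail_add]; exact norm_add_le _ _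
    _ ≤ (x + y) 0 := by rw [PiLp.add_apply]; linarith

lemma smul_mem_soc {c : ℝ} (hc : 0 ≤ c) {x : EuclideanSpace ℝ (Fin (n + 1))} (hx : x ∈ soc n) :
    c • x ∈ soc n := by
  rw [mem_soc_iff] at *
  calc ‖socTail (c • x)‖ = c * ‖socTail x‖ := by
        rw [socTail_smul, norm_smul, Real.norm_of_nonneg hc]
    _ ≤ (c • x) 0 := by rw [PiLp.smul_apply, smul_eq_mul]; gcongr

lemma convex_soc : Convex ℝ (soc n) :=
  fun _ hx _ hy _ _ ha hb _ => add_mem_soc (smul_mem_soc ha hx) (smul_mem_soc hb hy)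

lemma socMk_mem_soc {a : ℝ} {y : EuclideanSpace ℝ (Fin n)} (h : ‖y‖ ≤ a) : socMk a y ∈ soc n := by
  rwa [mem_soc_iff, socTail_socMk, socMk_zero]

/-- One half of the self-duality `K* = K` of the second-order cone. -/
lemma neg_mem_soc_of_forall_inner_nonpos {d : EuclideanSpace ℝ (Fin (n + 1))}
    (hd : ∀ k ∈ soc n, ⟪d, k⟫_ℝ ≤ 0) : -d ∈ soc n := by
  have hhead : d 0 ≤ 0 := by
    have := hd (socMk 1 0) (socMk_mem_soc (by simp))
    simpa [real_inner_eq_mul_add_inner_socTail] using this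
  have htail : ‖socTail d‖ * (d 0 + ‖socTail d‖) ≤ 0 := by
    have := hd (socMk ‖socTail d‖ (socTail d)) (socMk_mem_soc le_rfl)
    rw [real_inner_eq_mul_add_inner_socTail, socMk_zero, socTail_socMk,
      real_inner_self_eq_norm_sq] at this
    linarith
  rw [mem_soc_iff, socTail_neg, norm_neg, PiLp.neg_apply]
  nlinarith [norm_nonneg (socTail d)]

lemma mem_socInt_or_mem_socBd {x : EuclideanSpace ℝ (Fin (n + 1))} (hx : x ∈ soc n) :
    x ∈ socInt n ∨ x ∈ socBd n :=
  (show tailNorm x ≤ x 0 from hx).lt_or_eq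

end SecondOrderCone

lemma mvE_neg {m p : ℕ} (B : Matrix (Fin m) (Fin p) ℝ) (t : Fin p → ℝ) :
    mvE B (-t) = -mvE B t := by
  ext i
  simp [mvE, Matrix.mulVec_neg]

theorem stmt4_general (n p : ℕ)
    (B : Matrix (Fin (n + 1)) (Fin p) ℝ)
    (ustar : EuclideanSpace ℝ (Fin (n + 1)))
    (H : Set (EuclideanSpace ℝ (Fin (n + 1))))
    (hH : H = {u | ∃ t : Fin p → ℝ, u = ustar + mvE B t})
    (hdisj : H ∩ socInt n = ∅)
    (hsingle : H ∩ socBd n = {ustar}) :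
    ∀ u ∈ H, u ≠ ustar →
      ∀ v ∈ soc n, (∀ w ∈ soc n, ‖u - v‖ ≤ ‖u - w‖) → v ≠ ustar := by
  rintro u hu hne v hv hmin rfl
  have hnormal : ∀ k ∈ soc n, ⟪u - v, k⟫_ℝ ≤ 0 := fun k hk => by
    simpa using real_inner_sub_le_zero_of_forall_norm_sub_le convex_soc hv hmin _
      (add_mem_soc hv hk)
  have hreflK : v + -(u - v) ∈ soc n :=
    add_mem_soc hv (neg_mem_soc_of_forall_inner_nonpos hnormal)
  obtain ⟨t, ht⟩ : ∃ t, u = v + mvE B t := by rw [hH] at hu; exact hu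
  have hreflH : v + -(u - v) ∈ H := by
    rw [hH]
    exact ⟨-t, by rw [mvE_neg, ht, add_sub_cancel_left]⟩
  rcases mem_socInt_or_mem_socBd hreflK with hint | hbd
  · exact (Set.eq_empty_iff_forall_notMem.mp hdisj) _ ⟨hreflH, hint⟩
  · have : v + -(u - v) ∈ H ∩ socBd n := ⟨hreflH, hbd⟩
    rw [hsingle, Set.mem_singleton_iff] at this
    exact hne (sub_eq_zero.mp (neg_eq_zero.mp (add_eq_left.mp this)))

/-- Assume `n ≥ 2`, `u* ∈ bd K_{n+1}`, `H ∩ int K_{n+1} = ∅`, and `H ∩ bd K_{n+1} = {u*}`,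
where `H = {u* + B t : t ∈ ℝ^p}` with `Bᵀ B = I_p`. Then for every `u ∈ H` with `u ≠ u*`,
the unique nearest point of `K_{n+1}` to `u` is not equal to `u*`. -/
theorem stmt4 (n p : ℕ) (hn : 2 ≤ n)
    (B : Matrix (Fin (n + 1)) (Fin p) ℝ) (hB : B.transpose * B = 1)
    (ustar : EuclideanSpace ℝ (Fin (n + 1))) (hustar : ustar ∈ socBd n)
    (H : Set (EuclideanSpace ℝ (Fin (n + 1))))
    (hH : H = {u | ∃ t : Fin p → ℝ, u = ustar + mvE B t})
    (hdisj : H ∩ socInt n = ∅)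
    (hsingle : H ∩ socBd n = {ustar}) :
    ∀ u ∈ H, u ≠ ustar →
      ∀ v ∈ soc n, (∀ w ∈ soc n, ‖u - v‖ ≤ ‖u - w‖) → v ≠ ustar :=
  stmt4_general n p B ustar H hH hdisj hsingle
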